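/- Let m ≥ 1 and n ≥ 1 be integers. Every simple graph G on n vertices with at least ⌊(m+1)n² / (2(m+2))⌋ + 1 edges has maximum degree Δ(G) ≥ n − ⌊n/(m+2)⌋. -/

import Mathlib

open SimpleGraph

/-- The join `G ∨ H` of two simple graphs: take disjoint copies of `G` and `H`
and add all edges between them. -/
def graphJoin {V W : Type*} (G : SimpleGraph V) (H : SimpleGraph W) :
    SimpleGraph (V ⊕ W) where
  Adj x y :=
    match x, y with
    | Sum.inl a, Sum.inl b => G.Adj a b
    | Sum.inr a, Sum.inr b => H.Adj a b
    | Sum.inl _, Sum.inr _ => True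
    | Sum.inr _, Sum.inl _ => True
  symm := ⟨by rintro (a | a) (b | b) h <;> first | exact h.symm | trivial⟩
  loopless := ⟨by rintro (a | a) h; exacts [G.irrefl h, H.irrefl h]⟩

/-- `H` is contained in `G` as a subgraph, i.e. `G` has a subgraph isomorphic to `H`. -/
def ContainsCopy {W V : Type*} (H : SimpleGraph W) (G : SimpleGraph V) : Prop :=
  ∃ f : H →g G, Function.Injective f

/-- The Turán number `ex(n, H)`: the maximum number of edges of a simple graph on
`n` vertices containing no subgraph isomorphic to `H`. -/
noncomputable def turanNumber {W : Type*} (n : ℕ) (H : SimpleGraph W) : ℕ :=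
  sSup {N : ℕ | ∃ G : SimpleGraph (Fin n), ¬ ContainsCopy H G ∧ G.edgeSet.ncard = N}

/-- The generalized wheel `W_{s,t} = K_s ∨ C_t`. -/
def genWheel (s t : ℕ) : SimpleGraph (Fin s ⊕ Fin t) :=
  graphJoin (⊤ : SimpleGraph (Fin s)) (cycleGraph t)

/-!
By the handshake lemma `2e ≤ nΔ`. If `Δ < n - ⌊n/(m+2)⌋`, then, since
`n < (m+2)(⌊n/(m+2)⌋ + 1)`, we get `(m+2)Δ ≤ (m+1)n`, hence `2(m+2)e ≤ (m+1)n²`,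
contradicting the edge count.
-/

theorem SimpleGraph.two_mul_card_edgeFinset_le_card_mul_maxDegree {V : Type*} [Fintype V]
    (G : SimpleGraph V) [DecidableRel G.Adj] :
    2 * G.edgeFinset.card ≤ Fintype.card V * G.maxDegree := by
  rw [← G.sum_degrees_eq_twice_card_edges]
  exact (Finset.sum_le_card_nsmul _ _ _ fun v _ ↦ G.degree_le_maxDegree v).trans_eq (by simp)

theorem Nat.succ_mul_le_mul_of_lt_sub_div {d n Δ : ℕ} (h : Δ < n - n / (d + 1)) :
    (d + 1) * Δ ≤ d * n := by
  have hn : n < (d + 1) * (n / (d + 1) + 1) := Nat.lt_mul_div_succ n d.succ_pos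
  have hΔ : Δ + n / (d + 1) + 1 ≤ n := by omega
  nlinarith

theorem maxDegree_ge_of_many_edges_general (m n : ℕ)
    (G : SimpleGraph (Fin n)) [DecidableRel G.Adj]
    (hG : (m + 1) * n ^ 2 / (2 * (m + 2)) + 1 ≤ G.edgeFinset.card) :
    n - n / (m + 2) ≤ G.maxDegree := by
  by_contra! hΔ
  have handshake := G.two_mul_card_edgeFinset_le_card_mul_maxDegree
  rw [Fintype.card_fin] at handshake
  have hedges : G.edgeFinset.card * (2 * (m + 2)) ≤ (m + 1) * n ^ 2 :=
    calc G.edgeFinset.card * (2 * (m + 2)) = (m + 2) * (2 * G.edgeFinset.card) := by ring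
      _ ≤ (m + 2) * (n * G.maxDegree) := Nat.mul_le_mul_left _ handshake
      _ = n * ((m + 2) * G.maxDegree) := by ring
      _ ≤ n * ((m + 1) * n) := Nat.mul_le_mul_left _ (Nat.succ_mul_le_mul_of_lt_sub_div hΔ)
      _ = (m + 1) * n ^ 2 := by ring
  have hfew := (Nat.le_div_iff_mul_le (by positivity)).2 hedges
  omega

/-- For integers `m ≥ 1` and `n ≥ 1`, every simple graph on `n`
vertices with at least `⌊(m+1)n²/(2(m+2))⌋ + 1` edges has maximum degree at least
`n - ⌊n/(m+2)⌋`. -/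
theorem maxDegree_ge_of_many_edges (m n : ℕ) (hm : 1 ≤ m) (hn : 1 ≤ n)
    (G : SimpleGraph (Fin n)) [DecidableRel G.Adj]
    (hG : (m + 1) * n ^ 2 / (2 * (m + 2)) + 1 ≤ G.edgeFinset.card) :
    n - n / (m + 2) ≤ G.maxDegree :=
  maxDegree_ge_of_many_edges_general m n G hG
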